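/- arXiv:2202.03397 — 3 statements merged into one kernel-verified Lean document; each statement's English description precedes it below -/
import Mathlib

section
/- Under the assumptions: ‖∂₁Φ(w,λ)‖ ≤ q < 1; ∂₁Φ(·,λ) is ν₁-Lipschitz and E₁ := ∇₁E(·,λ) is μ₁-Lipschitz in w; ‖∇₁E(w(λ),λ)‖ ≤ L_E; define v(w,λ) := (I − ∂₁Φ(w,λ)ᵀ)⁻¹ ∇₁E(w,λ) and let w(λ) be the fixed point of Φ(·,λ). Then for every w ∈ ℝ^d, ‖v(w(λ),λ) − v(w,λ)‖ ≤ (ν₁ L_E/(1−q)² + μ₁/(1−q)) ‖w(λ) − w‖. -/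
/-!
The solution operator `(I - Tᵀ)⁻¹` of the adjoint linear system has norm at most `1/(1-q)`
whenever `‖T‖ ≤ q < 1`, and two such inverses differ by `A (S - T) B` (the resolvent identity).
Splitting `v(w(λ),λ) - v(w,λ) = (A - B) ∇₁E(w(λ),λ) + B (∇₁E(w(λ),λ) - ∇₁E(w,λ))` then bounds the
first term by `ν₁ L_E ‖w(λ) - w‖/(1-q)²` and the second by `μ₁ ‖w(λ) - w‖/(1-q)`.
-/

theorem sub_eq_mul_sub_mul_of_one_sub {R : Type*} [Ring R] {S T A B : R}
    (hA : A * (1 - S) = 1) (hB : (1 - T) * B = 1) : A - B = A * (S - T) * B := by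
  calc A - B = A * ((1 - T) * B) - A * (1 - S) * B := by rw [hA, hB, mul_one, one_mul]
    _ = A * (S - T) * B := by noncomm_ring

section Operators

variable {𝕜 E : Type*} [NontriviallyNormedField 𝕜] [NormedAddCommGroup E] [NormedSpace 𝕜 E]

theorem ContinuousLinearMap.norm_le_of_mul_one_sub_eq_one {T B : E →L[𝕜] E} {q : ℝ}
    (hT : ‖T‖ ≤ q) (hq : q < 1) (hB : B * (1 - T) = 1) : ‖B‖ ≤ (1 - q)⁻¹ := by
  have hB' : B = 1 + B * T := by rw [mul_sub, mul_one] at hB; exact eq_add_of_sub_eq hB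
  have : ‖B‖ ≤ 1 + ‖B‖ * q :=
    calc ‖B‖ = ‖1 + B * T‖ := by rw [← hB']
      _ ≤ ‖(1 : E →L[𝕜] E)‖ + ‖B‖ * ‖T‖ := norm_add_le_of_le le_rfl (opNorm_comp_le _ _)
      _ ≤ 1 + ‖B‖ * q := by gcongr; exact norm_id_le
  rw [← one_div, le_div_iff₀ (by linarith)]
  linarith

theorem ContinuousLinearMap.norm_apply_sub_apply_le_of_one_sub {S T A B : E →L[𝕜] E} {q : ℝ}
    (hS : ‖S‖ ≤ q) (hT : ‖T‖ ≤ q) (hq : q < 1) (hA : A * (1 - S) = 1)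
    (hB₁ : (1 - T) * B = 1) (hB₂ : B * (1 - T) = 1) (x y : E) :
    ‖A x - B y‖ ≤ ‖S - T‖ * ‖x‖ / (1 - q) ^ 2 + ‖x - y‖ / (1 - q) := by
  have hA_le := norm_le_of_mul_one_sub_eq_one hS hq hA
  have hB_le := norm_le_of_mul_one_sub_eq_one hT hq hB₂
  have hAB : ‖A - B‖ ≤ (1 - q)⁻¹ * ‖S - T‖ * (1 - q)⁻¹ := by
    rw [sub_eq_mul_sub_mul_of_one_sub hA hB₁]
    exact (opNorm_comp_le _ _).trans
      (mul_le_mul ((opNorm_comp_le _ _).trans (by gcongr)) hB_le (norm_nonneg _) (by positivity))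
  calc ‖A x - B y‖ = ‖(A - B) x + B (x - y)‖ := by simp only [sub_apply, map_sub]; abel_nf
    _ ≤ ‖A - B‖ * ‖x‖ + ‖B‖ * ‖x - y‖ := norm_add_le_of_le (le_opNorm _ _) (le_opNorm _ _)
    _ ≤ (1 - q)⁻¹ * ‖S - T‖ * (1 - q)⁻¹ * ‖x‖ + (1 - q)⁻¹ * ‖x - y‖ := by gcongr
    _ = ‖S - T‖ * ‖x‖ / (1 - q) ^ 2 + ‖x - y‖ / (1 - q) := by field_simp

end Operators

/-- Lipschitz bound for the linear-system solution `v(w,λ) = (I − ∂₁Φ(w,λ)ᵀ)⁻¹ ∇₁E(w,λ)`: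
`‖v(w(λ),λ) − v(w,λ)‖ ≤ (ν₁ L_E/(1−q)² + μ₁/(1−q)) ‖w(λ) − w‖`. -/
theorem stmt10 {d m : ℕ} (Λ : Set (EuclideanSpace ℝ (Fin m)))
    (D₁Φ : EuclideanSpace ℝ (Fin d) → EuclideanSpace ℝ (Fin m) →
      (EuclideanSpace ℝ (Fin d) →L[ℝ] EuclideanSpace ℝ (Fin d)))
    (gradE : EuclideanSpace ℝ (Fin d) → EuclideanSpace ℝ (Fin m) → EuclideanSpace ℝ (Fin d))
    (q ν₁ μ₁ L_E : ℝ) (hq : q < 1)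
    (hcontr : ∀ wv lv, ‖D₁Φ wv lv‖ ≤ q)
    (hν₁ : ∀ lv ∈ Λ, ∀ w₁ w₂, ‖D₁Φ w₁ lv - D₁Φ w₂ lv‖ ≤ ν₁ * ‖w₁ - w₂‖)
    (hμ₁ : ∀ lv ∈ Λ, ∀ w₁ w₂, ‖gradE w₁ lv - gradE w₂ lv‖ ≤ μ₁ * ‖w₁ - w₂‖)
    (w : EuclideanSpace ℝ (Fin m) → EuclideanSpace ℝ (Fin d))
    (hLE : ∀ lv ∈ Λ, ‖gradE (w lv) lv‖ ≤ L_E)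
    (inv : EuclideanSpace ℝ (Fin d) → EuclideanSpace ℝ (Fin m) →
      (EuclideanSpace ℝ (Fin d) →L[ℝ] EuclideanSpace ℝ (Fin d)))
    (hinv : ∀ wv lv,
      (1 - ContinuousLinearMap.adjoint (D₁Φ wv lv)) * inv wv lv = 1 ∧
      inv wv lv * (1 - ContinuousLinearMap.adjoint (D₁Φ wv lv)) = 1)
    (v : EuclideanSpace ℝ (Fin d) → EuclideanSpace ℝ (Fin m) → EuclideanSpace ℝ (Fin d))
    (hv : ∀ wv lv, v wv lv = inv wv lv (gradE wv lv)) :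
    ∀ lv ∈ Λ, ∀ wv : EuclideanSpace ℝ (Fin d),
      ‖v (w lv) lv - v wv lv‖
        ≤ (ν₁ * L_E / (1 - q) ^ 2 + μ₁ / (1 - q)) * ‖w lv - wv‖ := by
  intro lv hlv wv
  have hadj : ∀ u, ‖ContinuousLinearMap.adjoint (D₁Φ u lv)‖ ≤ q := fun u => by
    rw [LinearIsometryEquiv.norm_map]; exact hcontr u lv
  have hdiff : ‖ContinuousLinearMap.adjoint (D₁Φ (w lv) lv)
      - ContinuousLinearMap.adjoint (D₁Φ wv lv)‖ ≤ ν₁ * ‖w lv - wv‖ := by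
    rw [← map_sub, LinearIsometryEquiv.norm_map]; exact hν₁ lv hlv _ _
  rw [hv, hv]
  refine (ContinuousLinearMap.norm_apply_sub_apply_le_of_one_sub (hadj _) (hadj _) hq
    (hinv _ _).2 (hinv _ _).1 (hinv _ _).2 _ _).trans ?_
  have hν : 0 ≤ ν₁ * ‖w lv - wv‖ := (norm_nonneg _).trans hdiff
  calc _ ≤ ν₁ * ‖w lv - wv‖ * L_E / (1 - q) ^ 2 + μ₁ * ‖w lv - wv‖ / (1 - q) := by
        gcongr
        · exact hLE lv hlv
        · exact hμ₁ lv hlv _ _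
    _ = _ := by ring
end

section
/- Let f : Λ → ℝ be L-smooth on a closed convex set Λ ⊆ ℝ^m (i.e., ∇f is L-Lipschitz on Λ), with f bounded below. Consider the projected inexact gradient iteration λ_{s+1} = P_Λ(λ_s − α g_s) with step size 0 < α ≤ 1/L, where g_s ∈ ℝ^m is arbitrary, and set δ_s := ‖∇f(λ_s) − g_s‖, Δ_f := f(λ_0) − inf_λ f(λ), and G_α(λ) := α⁻¹(λ − P_Λ(λ − α∇f(λ))). Then for every S ≥ 1, (1/S) Σ_{s=0}^{S−1} ‖G_α(λ_s)‖² ≤ (1/(Sα)) [8Δ_f + (10/L) Σ_{s=0}^{S−1} δ_s²]. -/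
/-!
Each step of the inexact projected gradient method is a sufficient-decrease step up to the
gradient error: combining the descent inequality with the variational inequality of the
projection gives `‖λ_{s+1} - λ_s‖² ≤ 4α (f λ_s - f λ_{s+1}) + 4α² δ_s²`. Since the projection is
nonexpansive, the exact gradient mapping at `λ_s` differs from `α⁻¹ (λ_s - λ_{s+1})` by at most
`δ_s`, so `α ‖G_α(λ_s)‖² ≤ 8 (f λ_s - f λ_{s+1}) + (10/L) δ_s²`. Summing telescopes the function
values, which are bounded below.
-/

open scoped RealInnerProductSpace NNReal

theorem mul_le_one_of_le_one_div {α : ℝ} {L : ℝ≥0} (hα : α ≤ 1 / L) : α * L ≤ 1 := by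
  rcases L.coe_nonneg.eq_or_lt with hL | hL
  · simp [← hL]
  · rwa [le_div_iff₀ hL] at hα

section InnerProductSpace

variable {E : Type*} [NormedAddCommGroup E] [InnerProductSpace ℝ E]

theorem real_inner_sub_le_zero_of_forall_norm_sub_le {s : Set E} (hs : Convex ℝ s)
    {u p : E} (hp : p ∈ s) (hmin : ∀ y ∈ s, ‖u - p‖ ≤ ‖u - y‖) {y : E} (hy : y ∈ s) :
    ⟪u - p, y - p⟫ ≤ 0 := by
  have : Nonempty s := ⟨⟨p, hp⟩⟩
  refine (norm_eq_iInf_iff_real_inner_le_zero hs hp).mp ?_ y hy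
  exact le_antisymm (le_ciInf fun w => hmin w w.2)
    (ciInf_le ⟨0, Set.forall_mem_range.2 fun w : s => norm_nonneg (u - w)⟩ ⟨p, hp⟩)

theorem lipschitzWith_one_of_forall_norm_sub_le {s : Set E} (hs : Convex ℝ s) {P : E → E}
    (hP : ∀ x, P x ∈ s ∧ ∀ y ∈ s, ‖x - P x‖ ≤ ‖x - y‖) : LipschitzWith 1 P := by
  refine LipschitzWith.of_dist_le_mul fun u v => ?_
  simp only [NNReal.coe_one, one_mul, dist_eq_norm]
  have hu := real_inner_sub_le_zero_of_forall_norm_sub_le hs (hP u).1 (hP u).2 (hP v).1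
  have hv := real_inner_sub_le_zero_of_forall_norm_sub_le hs (hP v).1 (hP v).2 (hP u).1
  have key : ‖P u - P v‖ ^ 2 ≤ ⟪u - v, P u - P v⟫ := by
    have : ⟪u - v, P u - P v⟫ =
        ‖P u - P v‖ ^ 2 - ⟪u - P u, P v - P u⟫ - ⟪v - P v, P u - P v⟫ := by
      rw [← real_inner_self_eq_norm_sq]
      simp only [inner_sub_left, inner_sub_right]
      ring
    linarith
  nlinarith [real_inner_le_norm (u - v) (P u - P v), norm_nonneg (P u - P v), norm_nonneg (u - v)]

theorem LipschitzWith.norm_inv_smul_sub_le {P : E → E} (hP : LipschitzWith 1 P) {α : ℝ}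
    (hα0 : 0 < α) (x v g : E) :
    ‖α⁻¹ • (x - P (x - α • v))‖ ≤ α⁻¹ * ‖P (x - α • g) - x‖ + ‖v - g‖ := by
  have hPv : ‖P (x - α • g) - P (x - α • v)‖ ≤ α * ‖v - g‖ := by
    simpa [← smul_sub, norm_smul, abs_of_pos hα0] using hP.norm_sub_le (x - α • g) (x - α • v)
  calc ‖α⁻¹ • (x - P (x - α • v))‖
      = α⁻¹ * ‖(x - P (x - α • g)) + (P (x - α • g) - P (x - α • v))‖ := by
        rw [norm_smul, Real.norm_of_nonneg (inv_nonneg.2 hα0.le), sub_add_sub_cancel]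
    _ ≤ α⁻¹ * (‖x - P (x - α • g)‖ + ‖P (x - α • g) - P (x - α • v)‖) := by
        gcongr
        exact norm_add_le _ _
    _ ≤ α⁻¹ * (‖P (x - α • g) - x‖ + α * ‖v - g‖) := by
        rw [norm_sub_rev x]
        gcongr
    _ = α⁻¹ * ‖P (x - α • g) - x‖ + ‖v - g‖ := by field_simp

variable [CompleteSpace E]

/-- The descent lemma. -/
theorem LipschitzOnWith.le_add_inner_add_sq {f : E → ℝ} {f' : E → E} {s : Set E} {L : ℝ≥0}
    (hs : Convex ℝ s) (hgrad : ∀ x ∈ s, HasGradientAt f (f' x) x) (hf' : LipschitzOnWith L f' s)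
    {x y : E} (hx : x ∈ s) (hy : y ∈ s) :
    f y ≤ f x + ⟪f' x, y - x⟫ + L / 2 * ‖y - x‖ ^ 2 := by
  set d := y - x
  have hseg : ∀ t ∈ Set.Icc (0 : ℝ) 1, x + t • d ∈ s := fun t ht => by
    convert hs.add_smul_sub_mem hx hy ht using 1
  -- `f` along the segment minus its quadratic model is antitone on `[0, 1]`
  let q : ℝ → ℝ := fun t => f (x + t • d) - t * ⟪f' x, d⟫ - L / 2 * t ^ 2 * ‖d‖ ^ 2
  have hq : ∀ t ∈ Set.Icc (0 : ℝ) 1,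
      HasDerivAt q (⟪f' (x + t • d) - f' x, d⟫ - L * t * ‖d‖ ^ 2) t := by
    intro t ht
    have hline : HasDerivAt (fun t : ℝ => x + t • d) d t := by
      simpa using ((hasDerivAt_id t).smul_const d).const_add x
    have hf := ((hgrad _ (hseg t ht)).hasFDerivAt.comp_hasDerivAt t hline)
    have := (hf.sub ((hasDerivAt_id t).mul_const ⟪f' x, d⟫)).sub
      (((hasDerivAt_pow 2 t).const_mul (L / 2 : ℝ)).mul_const (‖d‖ ^ 2))
    refine this.congr_deriv ?_
    simp only [InnerProductSpace.toDual_apply_apply, inner_sub_left]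
    ring
  have hanti : AntitoneOn q (Set.Icc 0 1) := by
    refine antitoneOn_of_hasDerivWithinAt_nonpos (convex_Icc 0 1)
      (fun t ht => (hq t ht).continuousAt.continuousWithinAt)
      (fun t ht => (hq t (interior_subset ht)).hasDerivWithinAt) fun t ht => ?_
    have ht' := interior_subset ht
    rw [interior_Icc] at ht
    have hlip : ‖f' (x + t • d) - f' x‖ ≤ L * (t * ‖d‖) := by
      simpa [norm_smul, abs_of_pos ht.1] using hf'.norm_sub_le (hseg t ht') hx
    nlinarith [real_inner_le_norm (f' (x + t • d) - f' x) d, norm_nonneg d]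
  have := hanti (Set.left_mem_Icc.2 zero_le_one) (Set.right_mem_Icc.2 zero_le_one) zero_le_one
  norm_num [q, d] at this
  linarith

/-- Sufficient decrease of a projected step `x' = P_s (x - α g)` along an inexact gradient `g`. -/
theorem LipschitzOnWith.norm_projected_step_sq_le {f : E → ℝ} {f' : E → E} {s : Set E}
    {L : ℝ≥0} (hs : Convex ℝ s) (hgrad : ∀ x ∈ s, HasGradientAt f (f' x) x)
    (hf' : LipschitzOnWith L f' s) {α : ℝ} (hα0 : 0 < α) (hα : α ≤ 1 / L) {x x' g : E}
    (hx : x ∈ s) (hx' : x' ∈ s) (hmin : ∀ y ∈ s, ‖x - α • g - x'‖ ≤ ‖x - α • g - y‖) :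
    ‖x' - x‖ ^ 2 ≤ 4 * α * (f x - f x') + 4 * α ^ 2 * ‖f' x - g‖ ^ 2 := by
  set d := x' - x
  set δ := ‖f' x - g‖
  have hdesc : f x' ≤ f x + ⟪f' x, d⟫ + L / 2 * ‖d‖ ^ 2 := hf'.le_add_inner_add_sq hs hgrad hx hx'
  have hproj : ‖d‖ ^ 2 + α * ⟪g, d⟫ ≤ 0 := by
    have h := real_inner_sub_le_zero_of_forall_norm_sub_le hs hx' hmin hx
    rw [show x - α • g - x' = -d - α • g by simp only [d]; abel,
      show x - x' = -d by simp only [d, neg_sub]] at h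
    have : ⟪-d - α • g, -d⟫ = ‖d‖ ^ 2 + α * ⟪g, d⟫ := by
      simp only [inner_sub_left, inner_neg_left, inner_neg_right, real_inner_smul_left,
        real_inner_self_eq_norm_sq]
      ring
    linarith
  have herr : α * ⟪f' x - g, d⟫ ≤ α * (δ * ‖d‖) :=
    mul_le_mul_of_nonneg_left (real_inner_le_norm _ _) hα0.le
  have hcurv : α * L * ‖d‖ ^ 2 ≤ ‖d‖ ^ 2 :=
    mul_le_of_le_one_left (sq_nonneg _) (mul_le_one_of_le_one_div hα)
  have hyoung : α * δ * ‖d‖ ≤ α ^ 2 * δ ^ 2 + ‖d‖ ^ 2 / 4 := by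
    nlinarith [sq_nonneg (‖d‖ - 2 * α * δ)]
  have := mul_le_mul_of_nonneg_left hdesc hα0.le
  rw [← sub_add_cancel (f' x) g, inner_add_left] at this
  linarith

theorem LipschitzOnWith.mul_norm_gradientMapping_sq_le {f : E → ℝ} {f' : E → E} {s : Set E}
    {L : ℝ≥0} (hs : Convex ℝ s) (hgrad : ∀ x ∈ s, HasGradientAt f (f' x) x)
    (hf' : LipschitzOnWith L f' s) {P : E → E} (hP : ∀ x, P x ∈ s ∧ ∀ y ∈ s, ‖x - P x‖ ≤ ‖x - y‖)
    {α : ℝ} (hα0 : 0 < α) (hα : α ≤ 1 / L) {x : E} (hx : x ∈ s) (g : E) :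
    α * ‖α⁻¹ • (x - P (x - α • f' x))‖ ^ 2
      ≤ 8 * (f x - f (P (x - α • g))) + 10 / L * ‖f' x - g‖ ^ 2 := by
  set x' := P (x - α • g)
  set δ := ‖f' x - g‖
  have hdec : ‖x' - x‖ ^ 2 ≤ 4 * α * (f x - f x') + 4 * α ^ 2 * δ ^ 2 :=
    hf'.norm_projected_step_sq_le hs hgrad hα0 hα hx (hP _).1 (hP _).2
  have hG := (lipschitzWith_one_of_forall_norm_sub_le hs hP).norm_inv_smul_sub_le hα0 x (f' x) g
  calc α * ‖α⁻¹ • (x - P (x - α • f' x))‖ ^ 2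
      ≤ α * (2 * ((α⁻¹ * ‖x' - x‖) ^ 2 + δ ^ 2)) := by
        gcongr
        exact (pow_le_pow_left₀ (norm_nonneg _) hG 2).trans add_sq_le
    _ = 2 * α⁻¹ * ‖x' - x‖ ^ 2 + 2 * α * δ ^ 2 := by field_simp
    _ ≤ 2 * α⁻¹ * (4 * α * (f x - f x') + 4 * α ^ 2 * δ ^ 2) + 2 * α * δ ^ 2 := by gcongr
    _ = 8 * (f x - f x') + 10 * α * δ ^ 2 := by field_simp; ring
    _ ≤ 8 * (f x - f x') + 10 * (1 / L) * δ ^ 2 := by gcongr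
    _ = 8 * (f x - f x') + 10 / L * δ ^ 2 := by ring

end InnerProductSpace

theorem stmt13_general {m : ℕ} (Λ : Set (EuclideanSpace ℝ (Fin m)))
    (hΛconv : Convex ℝ Λ)
    (f : EuclideanSpace ℝ (Fin m) → ℝ)
    (f' : EuclideanSpace ℝ (Fin m) → EuclideanSpace ℝ (Fin m))
    (hgrad : ∀ x, HasGradientAt f (f' x) x)
    (L : NNReal) (hsmooth : LipschitzOnWith L f' Λ)
    (hbdd : BddBelow (Set.range f))
    (P : EuclideanSpace ℝ (Fin m) → EuclideanSpace ℝ (Fin m))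
    (hP : ∀ x, P x ∈ Λ ∧ ∀ y ∈ Λ, ‖x - P x‖ ≤ ‖x - y‖)
    (α : ℝ) (hα0 : 0 < α) (hα : α ≤ 1 / L)
    (lam g : ℕ → EuclideanSpace ℝ (Fin m))
    (hlam0 : lam 0 ∈ Λ)
    (hrec : ∀ s, lam (s + 1) = P (lam s - α • g s)) :
    ∀ S : ℕ, 1 ≤ S →
      (1 / (S : ℝ)) * ∑ s ∈ Finset.range S,
          ‖(α)⁻¹ • (lam s - P (lam s - α • f' (lam s)))‖ ^ 2
        ≤ (1 / ((S : ℝ) * α)) *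
            (8 * (f (lam 0) - ⨅ x, f x)
              + (10 / L) * ∑ s ∈ Finset.range S, ‖f' (lam s) - g s‖ ^ 2) := by
  intro S _
  have hmem : ∀ s, lam s ∈ Λ
    | 0 => hlam0
    | s + 1 => hrec s ▸ (hP _).1
  have hstep (s : ℕ) : α * ‖α⁻¹ • (lam s - P (lam s - α • f' (lam s)))‖ ^ 2
      ≤ 8 * (f (lam s) - f (lam (s + 1))) + 10 / L * ‖f' (lam s) - g s‖ ^ 2 := by
    rw [hrec]
    exact hsmooth.mul_norm_gradientMapping_sq_le hΛconv (fun x _ => hgrad x) hP hα0 hα (hmem s) _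
  have hsum : α * ∑ s ∈ Finset.range S, ‖α⁻¹ • (lam s - P (lam s - α • f' (lam s)))‖ ^ 2
      ≤ 8 * (f (lam 0) - f (lam S)) + 10 / L * ∑ s ∈ Finset.range S, ‖f' (lam s) - g s‖ ^ 2 := by
    rw [Finset.mul_sum, ← Finset.sum_range_sub' (fun s => f (lam s)), Finset.mul_sum,
      Finset.mul_sum, ← Finset.sum_add_distrib]
    exact Finset.sum_le_sum fun s _ => hstep s
  have hinf : f (lam S) ≥ ⨅ x, f x := ciInf_le hbdd (lam S)
  calc (1 / (S : ℝ)) * ∑ s ∈ Finset.range S, ‖α⁻¹ • (lam s - P (lam s - α • f' (lam s)))‖ ^ 2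
      = 1 / ((S : ℝ) * α) * (α * ∑ s ∈ Finset.range S,
          ‖α⁻¹ • (lam s - P (lam s - α • f' (lam s)))‖ ^ 2) := by
        rw [one_div_mul_eq_div, one_div_mul_eq_div, mul_comm (S : ℝ), mul_div_mul_left _ _ hα0.ne']
    _ ≤ _ := by gcongr; linarith

/-- Projected inexact gradient descent with `α ≤ 1/L` on an `L`-smooth function bounded
below: `(1/S) Σ ‖G_α(λ_s)‖² ≤ (1/(Sα)) [8Δ_f + (10/L) Σ δ_s²]`. -/
theorem stmt13 {m : ℕ} (Λ : Set (EuclideanSpace ℝ (Fin m)))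
    (hΛne : Λ.Nonempty) (hΛc : IsClosed Λ) (hΛconv : Convex ℝ Λ)
    (f : EuclideanSpace ℝ (Fin m) → ℝ)
    (f' : EuclideanSpace ℝ (Fin m) → EuclideanSpace ℝ (Fin m))
    (hgrad : ∀ x, HasGradientAt f (f' x) x)
    (L : NNReal) (hL : (0 : ℝ) < L) (hsmooth : LipschitzOnWith L f' Λ)
    (hbdd : BddBelow (Set.range f))
    (P : EuclideanSpace ℝ (Fin m) → EuclideanSpace ℝ (Fin m))
    (hP : ∀ x, P x ∈ Λ ∧ ∀ y ∈ Λ, ‖x - P x‖ ≤ ‖x - y‖)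
    (α : ℝ) (hα0 : 0 < α) (hα : α ≤ 1 / L)
    (lam g : ℕ → EuclideanSpace ℝ (Fin m))
    (hlam0 : lam 0 ∈ Λ)
    (hrec : ∀ s, lam (s + 1) = P (lam s - α • g s)) :
    ∀ S : ℕ, 1 ≤ S →
      (1 / (S : ℝ)) * ∑ s ∈ Finset.range S,
          ‖(α)⁻¹ • (lam s - P (lam s - α • f' (lam s)))‖ ^ 2
        ≤ (1 / ((S : ℝ) * α)) *
            (8 * (f (lam 0) - ⨅ x, f x)
              + (10 / L) * ∑ s ∈ Finset.range S, ‖f' (lam s) - g s‖ ^ 2) :=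
  stmt13_general Λ hΛconv f f' hgrad L hsmooth hbdd P hP α hα0 hα lam g hlam0 hrec
end

section
/- Let f : Λ → ℝ be bounded below with Δ_f := f(λ₀) − inf f < ∞, L-smooth on closed convex Λ, and suppose the sequence (λ_s) is generated by λ_{s+1} = P_Λ(λ_s − α ĝ_s) with α ≤ 1/L and random gradient estimates ĝ_s satisfying E[‖ĝ_s − ∇f(λ_s)‖²] ≤ C/(c₃(s+1)) for constants C, c₃ > 0. Then for every S ≥ 1, (1/S) Σ_{s=0}^{S−1} E[‖G_α(λ_s)‖²] ≤ (1/(Sα)) [8Δ_f + (10/L)(C/c₃)(log S + 1)]. -/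
/-! Each projected step `x⁺ = P (x - α g)` with an inexact gradient `g` satisfies, by the
variational inequality of the projection and the descent lemma,
`‖G_α(x)‖² ≤ (8/α) (f x - f x⁺) + 10 ‖g - ∇f(x)‖²`, where nonexpansiveness of the projection
compares the exact and the inexact gradient mappings. Summing telescopes the function values
into `8 Δ_f / α`; taking expectations turns the gradient errors into `C / (c₃ (s+1))`, whose sum
is at most `(C/c₃)(log S + 1)`, and `1 ≤ 1 / (L α)` absorbs the constant 10. -/

open MeasureTheory RealInnerProductSpace Finset

section NearestPoint

variable {F : Type*} [NormedAddCommGroup F]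

def IsNearestPointMap (Λ : Set F) (P : F → F) : Prop :=
  ∀ x, P x ∈ Λ ∧ ∀ y ∈ Λ, ‖x - P x‖ ≤ ‖x - y‖

namespace IsNearestPointMap

variable {Λ : Set F} {P : F → F}

theorem mem (hP : IsNearestPointMap Λ P) (x : F) : P x ∈ Λ := (hP x).1

variable [InnerProductSpace ℝ F]

theorem inner_sub_sub_nonpos (hΛ : Convex ℝ Λ) (hP : IsNearestPointMap Λ P) (x : F) {y : F}
    (hy : y ∈ Λ) : ⟪x - P x, y - P x⟫ ≤ 0 := by
  have : Nonempty Λ := ⟨⟨P x, hP.mem x⟩⟩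
  have hinf : ‖x - P x‖ = ⨅ w : Λ, ‖x - (w : F)‖ :=
    le_antisymm (le_ciInf fun w => (hP x).2 w w.2)
      (ciInf_le ⟨0, by rintro _ ⟨w, rfl⟩; exact norm_nonneg _⟩ (⟨P x, hP.mem x⟩ : Λ))
  exact (norm_eq_iInf_iff_real_inner_le_zero hΛ (hP.mem x)).1 hinf y hy

theorem norm_sub_le (hΛ : Convex ℝ Λ) (hP : IsNearestPointMap Λ P) (x y : F) :
    ‖P x - P y‖ ≤ ‖x - y‖ := by
  have hx := hP.inner_sub_sub_nonpos hΛ x (hP.mem y)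
  have hy := hP.inner_sub_sub_nonpos hΛ y (hP.mem x)
  have hfirm : ‖P x - P y‖ ^ 2 ≤ ⟪x - y, P x - P y⟫ := by
    have e : ⟪x - y, P x - P y⟫ - ‖P x - P y‖ ^ 2
        = -⟪x - P x, P y - P x⟫ - ⟪y - P y, P x - P y⟫ := by
      rw [← real_inner_self_eq_norm_sq]
      simp only [inner_sub_left, inner_sub_right, real_inner_comm (P x)]
      ring
    linarith
  nlinarith [real_inner_le_norm (x - y) (P x - P y), norm_nonneg (P x - P y),
    norm_nonneg (x - y)]

end IsNearestPointMap

end NearestPoint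

section Descent

variable {F : Type*} [NormedAddCommGroup F] [InnerProductSpace ℝ F] [CompleteSpace F]
  {Λ : Set F} {f : F → ℝ} {f' : F → F} {L : NNReal}

/-- The descent lemma: `t ↦ f (x + t • v) - t ⟪f' x, v⟫ - (L/2) t² ‖v‖²` is antitone on `[0, 1]`. -/
theorem Convex.le_add_inner_add_of_lipschitzOnWith_gradient (hΛ : Convex ℝ Λ)
    (hgrad : ∀ x ∈ Λ, HasGradientAt f (f' x) x) (hsmooth : LipschitzOnWith L f' Λ)
    {x y : F} (hx : x ∈ Λ) (hy : y ∈ Λ) :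
    f y ≤ f x + ⟪f' x, y - x⟫ + L / 2 * ‖y - x‖ ^ 2 := by
  set v := y - x
  set φ : ℝ → ℝ := fun t => f (x + t • v) - t * ⟪f' x, v⟫ - L / 2 * t ^ 2 * ‖v‖ ^ 2
  have hseg : ∀ t ∈ Set.Icc (0 : ℝ) 1, x + t • v ∈ Λ := fun t ht =>
    hΛ.add_smul_sub_mem hx hy ht
  have hφ' : ∀ t ∈ Set.Icc (0 : ℝ) 1,
      HasDerivAt φ (⟪f' (x + t • v) - f' x, v⟫ - L * t * ‖v‖ ^ 2) t := by
    intro t ht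
    have hline : HasDerivAt (fun t : ℝ => x + t • v) v t := by
      simpa using ((hasDerivAt_id t).smul_const v).const_add x
    have hf : HasDerivAt (fun t : ℝ => f (x + t • v)) ⟪f' (x + t • v), v⟫ t := by
      have := (hgrad _ (hseg t ht)).hasFDerivAt.comp_hasDerivAt t hline
      rwa [InnerProductSpace.toDual_apply_apply] at this
    have hquad : HasDerivAt (fun t : ℝ => L / 2 * t ^ 2 * ‖v‖ ^ 2) (L * t * ‖v‖ ^ 2) t :=
      (((hasDerivAt_pow 2 t).const_mul ((L : ℝ) / 2)).mul_const (‖v‖ ^ 2)).congr_deriv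
        (by ring)
    exact ((hf.sub ((hasDerivAt_id' t).mul_const ⟪f' x, v⟫)).sub hquad).congr_deriv
      (by rw [inner_sub_left, one_mul])
  have hanti : AntitoneOn φ (Set.Icc 0 1) := by
    refine antitoneOn_of_hasDerivWithinAt_nonpos (convex_Icc 0 1)
      (fun t ht => (hφ' t ht).continuousAt.continuousWithinAt)
      (fun t ht => (hφ' t (interior_subset ht)).hasDerivWithinAt) ?_
    intro t ht
    rw [interior_Icc] at ht
    have hlip : ‖f' (x + t • v) - f' x‖ ≤ L * (t * ‖v‖) := by
      simpa [dist_eq_norm, norm_smul, abs_of_pos ht.1] using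
        hsmooth.dist_le_mul _ (hseg t (Set.Ioo_subset_Icc_self ht)) x hx
    nlinarith [real_inner_le_norm (f' (x + t • v) - f' x) v,
      mul_le_mul_of_nonneg_right hlip (norm_nonneg v)]
  have h01 := hanti (Set.left_mem_Icc.2 zero_le_one) (Set.right_mem_Icc.2 zero_le_one)
    zero_le_one
  simp only [φ, v, one_smul, zero_smul, add_zero, zero_mul, sub_zero, one_pow, mul_one,
    add_sub_cancel] at h01
  linarith

end Descent

section GradientMapping

variable {F : Type*} [NormedAddCommGroup F] [InnerProductSpace ℝ F]
  {Λ : Set F} {P : F → F} {α : ℝ}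

/-- `G_α(x) = gradientMapping P α (∇f x) x`; with an estimate `v` of the gradient,
`x - α • gradientMapping P α v x` is the projected step. -/
noncomputable def gradientMapping (P : F → F) (α : ℝ) (v x : F) : F :=
  α⁻¹ • (x - P (x - α • v))

theorem norm_gradientMapping_sub_le (hΛ : Convex ℝ Λ) (hP : IsNearestPointMap Λ P)
    (hα : 0 < α) (v w x : F) :
    ‖gradientMapping P α v x - gradientMapping P α w x‖ ≤ ‖v - w‖ := by
  have hproj := hP.norm_sub_le hΛ (x - α • w) (x - α • v)
  rw [show x - α • w - (x - α • v) = α • (v - w) by rw [smul_sub]; abel, norm_smul,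
    Real.norm_of_nonneg hα.le] at hproj
  rw [gradientMapping, gradientMapping, ← smul_sub, sub_sub_sub_cancel_left, norm_smul,
    Real.norm_of_nonneg (inv_nonneg.2 hα.le), inv_mul_le_iff₀ hα]
  exact hproj

variable [CompleteSpace F] {f : F → ℝ} {f' : F → F} {L : NNReal}

theorem norm_sub_proj_step_sq_le (hΛ : Convex ℝ Λ) (hP : IsNearestPointMap Λ P)
    (hgrad : ∀ x ∈ Λ, HasGradientAt f (f' x) x) (hsmooth : LipschitzOnWith L f' Λ)
    (hα : 0 < α) (hαL : L * α ≤ 1) {x : F} (hx : x ∈ Λ) (v : F) :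
    ‖x - P (x - α • v)‖ ^ 2
      ≤ 4 * α * (f x - f (P (x - α • v))) + 4 * α ^ 2 * ‖v - f' x‖ ^ 2 := by
  set y := P (x - α • v)
  set d := x - y
  have hvar : ‖d‖ ^ 2 ≤ α * ⟪v, d⟫ := by
    have h := hP.inner_sub_sub_nonpos hΛ (x - α • v) hx
    rw [show x - α • v - y = d - α • v from sub_right_comm _ _ _, inner_sub_left,
      real_inner_smul_left, real_inner_self_eq_norm_sq] at h
    linarith
  have hdesc := hΛ.le_add_inner_add_of_lipschitzOnWith_gradient hgrad hsmooth hx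
    (hP.mem (x - α • v))
  rw [show y - x = -d from (neg_sub x y).symm, inner_neg_right, norm_neg,
    show ⟪f' x, d⟫ = ⟪v, d⟫ - ⟪v - f' x, d⟫ by rw [inner_sub_left]; ring] at hdesc
  have hcs := real_inner_le_norm (v - f' x) d
  -- `α L ‖d‖² ≤ ‖d‖²`, and `α ‖v - ∇f x‖ ‖d‖ ≤ α² ‖v - ∇f x‖² + ‖d‖² / 4`
  nlinarith [mul_le_mul_of_nonneg_left hdesc hα.le, mul_le_mul_of_nonneg_left hcs hα.le,
    mul_le_mul_of_nonneg_right hαL (sq_nonneg ‖d‖), sq_nonneg (‖d‖ - 2 * α * ‖v - f' x‖)]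

theorem norm_gradientMapping_sq_le (hΛ : Convex ℝ Λ) (hP : IsNearestPointMap Λ P)
    (hgrad : ∀ x ∈ Λ, HasGradientAt f (f' x) x) (hsmooth : LipschitzOnWith L f' Λ)
    (hα : 0 < α) (hαL : L * α ≤ 1) {x : F} (hx : x ∈ Λ) (v : F) :
    ‖gradientMapping P α (f' x) x‖ ^ 2
      ≤ 8 / α * (f x - f (P (x - α • v))) + 10 * ‖v - f' x‖ ^ 2 := by
  have hdec := norm_sub_proj_step_sq_le hΛ hP hgrad hsmooth hα hαL hx v
  have hcmp := norm_gradientMapping_sub_le hΛ hP hα (f' x) v x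
  have hinexact : ‖gradientMapping P α v x‖ ^ 2 ≤ 4 / α * (f x - f (P (x - α • v)))
      + 4 * ‖v - f' x‖ ^ 2 := by
    rw [gradientMapping, norm_smul, mul_pow, norm_inv, Real.norm_of_nonneg hα.le,
      inv_pow, inv_mul_le_iff₀ (by positivity)]
    calc ‖x - P (x - α • v)‖ ^ 2 ≤ _ := hdec
      _ = α ^ 2 * (4 / α * (f x - f (P (x - α • v))) + 4 * ‖v - f' x‖ ^ 2) := by
        field_simp
  have htri : ‖gradientMapping P α (f' x) x‖ ≤ ‖gradientMapping P α v x‖ + ‖v - f' x‖ := by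
    rw [norm_sub_rev (f' x)] at hcmp
    linarith [norm_le_insert' (gradientMapping P α (f' x) x) (gradientMapping P α v x)]
  calc ‖gradientMapping P α (f' x) x‖ ^ 2
      ≤ (‖gradientMapping P α v x‖ + ‖v - f' x‖) ^ 2 := by gcongr
    _ ≤ 2 * (‖gradientMapping P α v x‖ ^ 2 + ‖v - f' x‖ ^ 2) := add_sq_le
    _ ≤ _ := by rw [show (8 : ℝ) / α = 2 * (4 / α) by ring]; linarith

end GradientMapping

section Trajectory

variable {F : Type*} [NormedAddCommGroup F] [InnerProductSpace ℝ F] [CompleteSpace F]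
  {Λ : Set F} {P : F → F} {α : ℝ} {f : F → ℝ} {f' : F → F} {L : NNReal}

theorem sum_norm_gradientMapping_sq_le (hΛ : Convex ℝ Λ) (hP : IsNearestPointMap Λ P)
    (hgrad : ∀ x ∈ Λ, HasGradientAt f (f' x) x) (hsmooth : LipschitzOnWith L f' Λ)
    (hbdd : BddBelow (Set.range f)) (hα : 0 < α) (hαL : L * α ≤ 1)
    {x v : ℕ → F} (hx₀ : x 0 ∈ Λ) (hstep : ∀ s, x (s + 1) = P (x s - α • v s)) (S : ℕ) :
    ∑ s ∈ range S, ‖gradientMapping P α (f' (x s)) (x s)‖ ^ 2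
      ≤ 8 / α * (f (x 0) - ⨅ z, f z) + 10 * ∑ s ∈ range S, ‖v s - f' (x s)‖ ^ 2 := by
  have hmem : ∀ s, x s ∈ Λ
    | 0 => hx₀
    | s + 1 => hstep s ▸ hP.mem _
  calc ∑ s ∈ range S, ‖gradientMapping P α (f' (x s)) (x s)‖ ^ 2
      ≤ ∑ s ∈ range S, (8 / α * (f (x s) - f (x (s + 1))) + 10 * ‖v s - f' (x s)‖ ^ 2) :=
        sum_le_sum fun s _ => hstep s ▸
          norm_gradientMapping_sq_le hΛ hP hgrad hsmooth hα hαL (hmem s) (v s)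
    _ = 8 / α * (f (x 0) - f (x S)) + 10 * ∑ s ∈ range S, ‖v s - f' (x s)‖ ^ 2 := by
        rw [sum_add_distrib, ← mul_sum, ← mul_sum, sum_range_sub' (fun s => f (x s))]
    _ ≤ _ := by gcongr; exact ciInf_le hbdd (x S)

end Trajectory

theorem sum_integral_le_of_forall_sum_le {Ω : Type*} [MeasurableSpace Ω] {μ : Measure Ω}
    [IsProbabilityMeasure μ] {a b : ℕ → Ω → ℝ} {c : ℝ} {S : ℕ}
    (ha₀ : ∀ s ω, 0 ≤ a s ω) (ha : ∀ s, AEStronglyMeasurable (a s) μ)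
    (hb : ∀ s, Integrable (b s) μ)
    (hab : ∀ ω, ∑ s ∈ range S, a s ω ≤ c + ∑ s ∈ range S, b s ω) :
    ∑ s ∈ range S, ∫ ω, a s ω ∂μ ≤ c + ∑ s ∈ range S, ∫ ω, b s ω ∂μ := by
  have hbsum : Integrable (fun ω => ∑ s ∈ range S, b s ω) μ :=
    integrable_finsetSum _ fun s _ => hb s
  have hbound : Integrable (fun ω => c + ∑ s ∈ range S, b s ω) μ :=
    (integrable_const c).add hbsum
  have hai : ∀ s ∈ range S, Integrable (a s) μ := fun s hs =>
    hbound.mono' (ha s) (Filter.Eventually.of_forall fun ω => by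
      rw [Real.norm_of_nonneg (ha₀ s ω)]
      exact (single_le_sum (fun s _ => ha₀ s ω) hs).trans (hab ω))
  rw [← integral_finsetSum _ hai, ← integral_finsetSum _ fun s _ => hb s]
  calc ∫ ω, ∑ s ∈ range S, a s ω ∂μ ≤ ∫ ω, c + ∑ s ∈ range S, b s ω ∂μ :=
        integral_mono (integrable_finsetSum _ hai) hbound hab
    _ = _ := by rw [integral_add (integrable_const c) hbsum]; simp

theorem sum_range_inv_add_one_le_log_add_one (S : ℕ) :
    ∑ s ∈ range S, ((s : ℝ) + 1)⁻¹ ≤ Real.log S + 1 := by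
  have h := harmonic_le_one_add_log S
  push_cast [harmonic] at h
  linarith

theorem stmt19_general {Ω : Type*} [MeasurableSpace Ω] (μ : Measure Ω) [IsProbabilityMeasure μ]
    {m : ℕ} (Λ : Set (EuclideanSpace ℝ (Fin m)))
    (hΛconv : Convex ℝ Λ)
    (f : EuclideanSpace ℝ (Fin m) → ℝ)
    (f' : EuclideanSpace ℝ (Fin m) → EuclideanSpace ℝ (Fin m))
    (hgrad : ∀ x, HasGradientAt f (f' x) x)
    (L : NNReal) (hL : (0 : ℝ) < L) (hsmooth : LipschitzOnWith L f' Λ)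
    (hbdd : BddBelow (Set.range f))
    (P : EuclideanSpace ℝ (Fin m) → EuclideanSpace ℝ (Fin m))
    (hP : ∀ x, P x ∈ Λ ∧ ∀ y ∈ Λ, ‖x - P x‖ ≤ ‖x - y‖)
    (α : ℝ) (hα0 : 0 < α) (hα : α ≤ 1 / L)
    (C c₃ : ℝ) (hC : 0 < C) (hc₃ : 0 < c₃)
    (lam₀ : EuclideanSpace ℝ (Fin m)) (hlam₀ : lam₀ ∈ Λ)
    (lam g : ℕ → Ω → EuclideanSpace ℝ (Fin m))
    (hlam0 : ∀ ω, lam 0 ω = lam₀)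
    (hrec : ∀ s ω, lam (s + 1) ω = P (lam s ω - α • g s ω))
    (hmeasG : ∀ s, AEStronglyMeasurable
      (fun ω => ‖(α)⁻¹ • (lam s ω - P (lam s ω - α • f' (lam s ω)))‖ ^ 2) μ)
    (hδint : ∀ s, Integrable (fun ω => ‖g s ω - f' (lam s ω)‖ ^ 2) μ)
    (hMSE : ∀ s : ℕ, ∫ ω, ‖g s ω - f' (lam s ω)‖ ^ 2 ∂μ ≤ C / (c₃ * ((s : ℝ) + 1))) :
    ∀ S : ℕ, 1 ≤ S →
      (1 / (S : ℝ)) * ∑ s ∈ Finset.range S,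
          ∫ ω, ‖(α)⁻¹ • (lam s ω - P (lam s ω - α • f' (lam s ω)))‖ ^ 2 ∂μ
        ≤ (1 / ((S : ℝ) * α)) *
            (8 * (f lam₀ - ⨅ x, f x)
              + (10 / L) * (C / c₃) * (Real.log S + 1)) := by
  intro S _
  have hαL : (L : ℝ) * α ≤ 1 := by rwa [le_div_iff₀ hL, mul_comm] at hα
  have hpath (ω : Ω) : ∑ s ∈ range S, ‖gradientMapping P α (f' (lam s ω)) (lam s ω)‖ ^ 2
      ≤ 8 / α * (f lam₀ - ⨅ x, f x) + ∑ s ∈ range S, 10 * ‖g s ω - f' (lam s ω)‖ ^ 2 := by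
    rw [← mul_sum, ← hlam0 ω]
    exact sum_norm_gradientMapping_sq_le hΛconv hP (fun x _ => hgrad x) hsmooth hbdd hα0 hαL
      (x := (lam · ω)) (hlam0 ω ▸ hlam₀) (hrec · ω) S
  have hnoise : ∑ s ∈ range S, ∫ ω, 10 * ‖g s ω - f' (lam s ω)‖ ^ 2 ∂μ
      ≤ 10 * (C / c₃ * (Real.log S + 1)) := by
    simp only [integral_const_mul, ← mul_sum]
    gcongr
    calc ∑ s ∈ range S, ∫ ω, ‖g s ω - f' (lam s ω)‖ ^ 2 ∂μ
        ≤ ∑ s ∈ range S, C / c₃ * ((s : ℝ) + 1)⁻¹ :=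
          sum_le_sum fun s _ => (hMSE s).trans_eq (by rw [div_mul_eq_div_div, div_eq_mul_inv])
      _ ≤ C / c₃ * (Real.log S + 1) := by
        rw [← mul_sum]; gcongr; exact sum_range_inv_add_one_le_log_add_one S
  have hsum := (sum_integral_le_of_forall_sum_le (fun s ω => by positivity) hmeasG
    (fun s => (hδint s).const_mul 10) hpath).trans (add_le_add_right hnoise _)
  have hH : 0 ≤ C / c₃ * (Real.log S + 1) := by
    have := Real.log_natCast_nonneg S; positivity
  calc 1 / (S : ℝ) * ∑ s ∈ range S, ∫ ω, ‖gradientMapping P α (f' (lam s ω)) (lam s ω)‖ ^ 2 ∂μ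
      ≤ 1 / S * (8 / α * (f lam₀ - ⨅ x, f x) + 10 * (C / c₃ * (Real.log S + 1))) := by
        gcongr; exact hsum
    _ ≤ 1 / S * (8 / α * (f lam₀ - ⨅ x, f x)
          + 10 / (L * α) * (C / c₃ * (Real.log S + 1))) := by
        gcongr
        rw [le_div_iff₀ (by positivity)]
        linarith
    _ = _ := by ring

/-- Stochastic projected inexact gradient descent with MSE `≤ C/(c₃(s+1))`:
`(1/S) Σ E‖G_α(λ_s)‖² ≤ (1/(Sα)) [8Δ_f + (10/L)(C/c₃)(log S + 1)]`. -/
theorem stmt19 {Ω : Type*} [MeasurableSpace Ω] (μ : Measure Ω) [IsProbabilityMeasure μ]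
    {m : ℕ} (Λ : Set (EuclideanSpace ℝ (Fin m)))
    (hΛne : Λ.Nonempty) (hΛc : IsClosed Λ) (hΛconv : Convex ℝ Λ)
    (f : EuclideanSpace ℝ (Fin m) → ℝ)
    (f' : EuclideanSpace ℝ (Fin m) → EuclideanSpace ℝ (Fin m))
    (hgrad : ∀ x, HasGradientAt f (f' x) x)
    (L : NNReal) (hL : (0 : ℝ) < L) (hsmooth : LipschitzOnWith L f' Λ)
    (hbdd : BddBelow (Set.range f))
    (P : EuclideanSpace ℝ (Fin m) → EuclideanSpace ℝ (Fin m))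
    (hP : ∀ x, P x ∈ Λ ∧ ∀ y ∈ Λ, ‖x - P x‖ ≤ ‖x - y‖)
    (α : ℝ) (hα0 : 0 < α) (hα : α ≤ 1 / L)
    (C c₃ : ℝ) (hC : 0 < C) (hc₃ : 0 < c₃)
    (lam₀ : EuclideanSpace ℝ (Fin m)) (hlam₀ : lam₀ ∈ Λ)
    (lam g : ℕ → Ω → EuclideanSpace ℝ (Fin m))
    (hlam0 : ∀ ω, lam 0 ω = lam₀)
    (hrec : ∀ s ω, lam (s + 1) ω = P (lam s ω - α • g s ω))
    (hmeasG : ∀ s, AEStronglyMeasurable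
      (fun ω => ‖(α)⁻¹ • (lam s ω - P (lam s ω - α • f' (lam s ω)))‖ ^ 2) μ)
    (hδint : ∀ s, Integrable (fun ω => ‖g s ω - f' (lam s ω)‖ ^ 2) μ)
    (hMSE : ∀ s : ℕ, ∫ ω, ‖g s ω - f' (lam s ω)‖ ^ 2 ∂μ ≤ C / (c₃ * ((s : ℝ) + 1))) :
    ∀ S : ℕ, 1 ≤ S →
      (1 / (S : ℝ)) * ∑ s ∈ Finset.range S,
          ∫ ω, ‖(α)⁻¹ • (lam s ω - P (lam s ω - α • f' (lam s ω)))‖ ^ 2 ∂μ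
        ≤ (1 / ((S : ℝ) * α)) *
            (8 * (f lam₀ - ⨅ x, f x)
              + (10 / L) * (C / c₃) * (Real.log S + 1)) :=
  stmt19_general μ Λ hΛconv f f' hgrad L hL hsmooth hbdd P hP α hα0 hα C c₃ hC hc₃ lam₀ hlam₀ lam g
    hlam0 hrec hmeasG hδint hMSE
end
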